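/- arXiv:2301.13643 — 9 statements merged into one kernel-verified Lean document; each statement's English description precedes it below -/
import Mathlib

section
/- Let (b_k^{(1)})_{k\ge0} and (b_k^{(2)})_{k\ge0} be sequences of nonzero complex numbers and let \theta be the linear map on complex polynomials defined by \theta(x^n) = (b_n^{(2)}/b_n^{(1)}) x^n for all n \ge 0. Then for every polynomial p and every x, \theta(p)(x) = \sum_{k=0}^{\deg p} (\phi_k/k!) x^k p^{(k)}(x), where \phi_k = (-1)^k \sum_{m=0}^{k} ((-k)_m/m!) (b_m^{(2)}/b_m^{(1)}) = \sum_{m=0}^{k} (-1)^{k-m} \binom{k}{m} (b_m^{(2)}/b_m^{(1)}) and p^{(k)} denotes the k-th derivative of p. -/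
open Polynomial Finset

/-! The transfer operator is diagonal on monomials with eigenvalues `f n = b2 n / b1 n`, while
the Euler-type operator `X^k D^k` acts on `X^n` as multiplication by `n!/(n-k)! = k! (n choose k)`.
So `∑_k (φ_k / k!) X^k D^k` sends `X^n` to `(∑_k (n choose k) φ_k) X^n`, and with `φ_k = Δ^k f 0`
the forward difference of `f` at `0`, this is `f n X^n` by the Gregory–Newton formula. -/

lemma fwdDiff_iter_one_zero_eq_sum {R : Type*} [CommRing R] (f : ℕ → R) (k : ℕ) :
    (fwdDiff 1)^[k] f 0 = ∑ m ∈ range (k + 1), (-1 : R) ^ (k - m) * (k.choose m : R) * f m := by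
  simp [fwdDiff_iter_eq_sum_shift, zsmul_eq_mul]

lemma eq_sum_choose_mul_fwdDiff_iter {R : Type*} [CommRing R] (f : ℕ → R) {n N : ℕ}
    (hn : n ≤ N) : f n = ∑ k ∈ range (N + 1), (n.choose k : R) * (fwdDiff 1)^[k] f 0 := by
  have hsub : range (n + 1) ⊆ range (N + 1) := range_subset_range.2 (by omega)
  rw [← sum_subset hsub fun k _ hk ↦ by
    rw [Nat.choose_eq_zero_of_lt (by simpa using hk), Nat.cast_zero, zero_mul]]
  simpa [nsmul_eq_mul] using shift_eq_sum_fwdDiff_iter 1 f n 0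

lemma X_pow_mul_iterate_derivative_X_pow {R : Type*} [CommSemiring R] (n k : ℕ) :
    X ^ k * derivative^[k] (X ^ n : R[X]) = C (n.descFactorial k : R) * X ^ n := by
  rw [iterate_derivative_X_pow_eq_C_mul, mul_left_comm]
  rcases le_or_gt k n with hkn | hnk
  · rw [← pow_add, Nat.add_sub_cancel' hkn]
  · simp [Nat.descFactorial_eq_zero_iff_lt.2 hnk]

section XDExpansion

variable {K : Type*} [Field K] [CharZero K]

lemma sum_fwdDiff_iter_mul_X_pow_mul_iterate_derivative_X_pow (f : ℕ → K) {n N : ℕ}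
    (hn : n ≤ N) :
    ∑ k ∈ range (N + 1), C ((fwdDiff 1)^[k] f 0 / k.factorial) * X ^ k * derivative^[k] (X ^ n)
      = C (f n) * X ^ n := by
  have hterm : ∀ k, C ((fwdDiff 1)^[k] f 0 / k.factorial) * X ^ k * derivative^[k] (X ^ n : K[X])
      = C ((n.choose k : K) * (fwdDiff 1)^[k] f 0) * X ^ n := by
    intro k
    rw [mul_assoc, X_pow_mul_iterate_derivative_X_pow, ← mul_assoc, ← C_mul,
      Nat.descFactorial_eq_factorial_mul_choose, Nat.cast_mul]
    congr 2
    have : (k.factorial : K) ≠ 0 := Nat.cast_ne_zero.2 k.factorial_ne_zero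
    field_simp
  simp_rw [hterm, ← sum_mul, ← map_sum, ← eq_sum_choose_mul_fwdDiff_iter f hn]

theorem eq_sum_fwdDiff_iter_mul_X_pow_mul_iterate_derivative (f : ℕ → K)
    (θ : K[X] →ₗ[K] K[X]) (hθ : ∀ n, θ (X ^ n) = C (f n) * X ^ n) {p : K[X]} {N : ℕ}
    (hN : p.natDegree ≤ N) :
    θ p = ∑ k ∈ range (N + 1), C ((fwdDiff 1)^[k] f 0 / k.factorial) * X ^ k * derivative^[k] p := by
  rw [p.as_sum_range_C_mul_X_pow' (Nat.lt_succ_of_le hN)]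
  simp_rw [map_sum, iterate_derivative_sum, mul_sum]
  rw [sum_comm]
  refine sum_congr rfl fun n hn ↦ ?_
  simp_rw [← smul_eq_C_mul (p.coeff n), map_smul, iterate_derivative_smul, mul_smul_comm,
    ← smul_sum, hθ, sum_fwdDiff_iter_mul_X_pow_mul_iterate_derivative_X_pow f
      (mem_range_succ_iff.1 hn)]

end XDExpansion

theorem brenke_transfer_XD_expansion_general
    (b1 b2 : ℕ → ℂ)
    (θ : Polynomial ℂ →ₗ[ℂ] Polynomial ℂ)
    (hθ : ∀ n : ℕ, θ (X ^ n) = Polynomial.C (b2 n / b1 n) * X ^ n)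
    (p : Polynomial ℂ) (x : ℂ) :
    (θ p).eval x =
      ∑ k ∈ Finset.range (p.natDegree + 1),
        ((∑ m ∈ Finset.range (k + 1),
            (-1 : ℂ) ^ (k - m) * (k.choose m : ℂ) * (b2 m / b1 m)) / (Nat.factorial k : ℂ))
          * x ^ k * ((Polynomial.derivative^[k] p).eval x) := by
  rw [eq_sum_fwdDiff_iter_mul_X_pow_mul_iterate_derivative (fun m ↦ b2 m / b1 m) θ hθ le_rfl]
  simp [eval_finsetSum, fwdDiff_iter_one_zero_eq_sum]

/-- XD-expansion of the transfer operator `θ` between two Brenke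
polynomial sets: if `θ (X^n) = (b₂ₙ/b₁ₙ) X^n` for all `n`, then for every
polynomial `p` and point `x`,
`θ(p)(x) = ∑_{k=0}^{deg p} (φ_k/k!) x^k p^{(k)}(x)` where
`φ_k = ∑_{m=0}^{k} (-1)^{k-m} (k choose m) (b₂ₘ/b₁ₘ)`. -/
theorem brenke_transfer_XD_expansion
    (b1 b2 : ℕ → ℂ) (hb1 : ∀ k, b1 k ≠ 0) (hb2 : ∀ k, b2 k ≠ 0)
    (θ : Polynomial ℂ →ₗ[ℂ] Polynomial ℂ)
    (hθ : ∀ n : ℕ, θ (X ^ n) = Polynomial.C (b2 n / b1 n) * X ^ n)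
    (p : Polynomial ℂ) (x : ℂ) :
    (θ p).eval x =
      ∑ k ∈ Finset.range (p.natDegree + 1),
        ((∑ m ∈ Finset.range (k + 1),
            (-1 : ℂ) ^ (k - m) * (k.choose m : ℂ) * (b2 m / b1 m)) / (Nat.factorial k : ℂ))
          * x ^ k * ((Polynomial.derivative^[k] p).eval x) :=
  brenke_transfer_XD_expansion_general b1 b2 θ hθ p x
end

section
/- Let \gamma, \delta \in \mathbb{C} with 0 < Re(\gamma) < Re(\delta), and let f(x) = \sum_{n=0}^{\infty} a_n x^n be a power series with complex coefficients converging for all complex |x| < 1. Then for every real x with |x| < 1, \sum_{n=0}^{\infty} a_n ((\gamma)_n/(\delta)_n) x^n = (1/\beta(\gamma, \delta-\gamma)) \int_0^1 t^{\gamma-1} (1-t)^{\delta-\gamma-1} f(xt) \, dt, where t^{\gamma-1} and (1-t)^{\delta-\gamma-1} are complex powers of positive reals and the series on the left converges. -/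
open Finset

/-- The Pochhammer symbol `(γ)_n = γ(γ+1)⋯(γ+n-1)` for a complex number. -/
noncomputable def cpoch (γ : ℂ) (n : ℕ) : ℂ := ∏ i ∈ Finset.range n, (γ + i)

/-- Euler's Beta function `β(γ,δ) = Γ(γ)Γ(δ)/Γ(γ+δ)` for complex arguments. -/
noncomputable def cbeta (γ δ : ℂ) : ℂ :=
  Complex.Gamma γ * Complex.Gamma δ / Complex.Gamma (γ + δ)

/-!
Expand `f(xt) = ∑ aₙ xⁿ tⁿ` under the integral. Since `|xt| ≤ |x| < 1` on `(0, 1]` and the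
series converges absolutely at `|x|`, the terms are dominated by `‖aₙ‖ |x|ⁿ` times the
integrable Beta weight, so the integral may be taken termwise. The `n`-th moment of the weight is
`B(γ + n, δ - γ)`, and the Gamma-function recurrence gives
`B(γ + n, δ - γ) = (γ)ₙ / (δ)ₙ · B(γ, δ - γ)`.
-/

open MeasureTheory Set

theorem cpoch_eq_ascPochhammer_eval (γ : ℂ) (n : ℕ) : cpoch γ n = (ascPochhammer ℂ n).eval γ := by
  induction n with
  | zero => simp [cpoch]
  | succ n ih => simp [cpoch, Finset.prod_range_succ, ascPochhammer_succ_right, ← ih]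

theorem cbeta_eq_betaIntegral {u v : ℂ} (hu : 0 < u.re) (hv : 0 < v.re) :
    cbeta u v = Complex.betaIntegral u v :=
  (Complex.betaIntegral_eq_Gamma_mul_div u v hu hv).symm

namespace Complex

theorem ne_neg_natCast_of_re_pos {γ : ℂ} (hγ : 0 < γ.re) (k : ℕ) : γ ≠ -k := by
  rintro rfl
  simp only [neg_re, natCast_re, Left.neg_pos_iff] at hγ
  exact hγ.not_ge k.cast_nonneg

theorem Gamma_add_nat_eq_cpoch_mul {γ : ℂ} (hγ : ∀ k : ℕ, γ ≠ -k) (n : ℕ) :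
    Gamma (γ + n) = cpoch γ n * Gamma γ := by
  rw [cpoch_eq_ascPochhammer_eval, ← Gamma_add_nat_div_Gamma_eq γ hγ,
    div_mul_cancel₀ _ (Gamma_ne_zero hγ)]

theorem betaIntegral_add_nat {u v : ℂ} (hu : 0 < u.re) (hv : 0 < v.re) (n : ℕ) :
    betaIntegral (u + n) v = cpoch u n / cpoch (u + v) n * betaIntegral u v := by
  have huv : 0 < (u + v).re := by rw [add_re]; positivity
  have hun : 0 < (u + n).re := by simp only [add_re, natCast_re]; positivity
  rw [betaIntegral_eq_Gamma_mul_div _ _ hun hv, betaIntegral_eq_Gamma_mul_div _ _ hu hv,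
    add_right_comm, Gamma_add_nat_eq_cpoch_mul (ne_neg_natCast_of_re_pos hu),
    Gamma_add_nat_eq_cpoch_mul (ne_neg_natCast_of_re_pos huv), mul_assoc, mul_div_mul_comm]

theorem betaIntegral_ne_zero {u v : ℂ} (hu : 0 < u.re) (hv : 0 < v.re) :
    betaIntegral u v ≠ 0 := by
  have huv : 0 < (u + v).re := by rw [add_re]; positivity
  rw [betaIntegral_eq_Gamma_mul_div u v hu hv]
  exact div_ne_zero (mul_ne_zero (Gamma_ne_zero_of_re_pos hu) (Gamma_ne_zero_of_re_pos hv))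
    (Gamma_ne_zero_of_re_pos huv)

theorem integrableOn_betaIntegrand {u v : ℂ} (hu : 0 < u.re) (hv : 0 < v.re) :
    IntegrableOn (fun t : ℝ => (t : ℂ) ^ (u - 1) * ((1 - t : ℝ) : ℂ) ^ (v - 1)) (Ioc 0 1) := by
  simpa using (intervalIntegrable_iff_integrableOn_Ioc_of_le zero_le_one).1
    (betaIntegral_convergent hu hv)

theorem betaIntegral_add_nat_eq_setIntegral (u v : ℂ) (n : ℕ) :
    betaIntegral (u + n) v =
      ∫ t in Ioc (0 : ℝ) 1, (t : ℂ) ^ (u - 1) * ((1 - t : ℝ) : ℂ) ^ (v - 1) * (t : ℂ) ^ n := by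
  rw [betaIntegral, intervalIntegral.integral_of_le zero_le_one]
  refine setIntegral_congr_fun measurableSet_Ioc fun t ht => ?_
  rw [add_sub_right_comm, cpow_add _ _ (ofReal_ne_zero.2 ht.1.ne'), cpow_natCast]
  push_cast
  ring

end Complex

theorem summable_norm_mul_pow_of_summable_mul_pow {𝕜 : Type*} [NormedDivisionRing 𝕜]
    {a : ℕ → 𝕜} {z : 𝕜} (hz : Summable fun n => a n * z ^ n) {r : ℝ} (hr0 : 0 ≤ r)
    (hr : r < ‖z‖) : Summable fun n => ‖a n‖ * r ^ n := by
  have hz0 : 0 < ‖z‖ := hr0.trans_lt hr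
  have hbounded : ∀ᶠ n in Filter.atTop, ‖a n‖ * ‖z‖ ^ n ≤ 1 := by
    have := hz.tendsto_atTop_zero.norm.eventually (ge_mem_nhds (by simp : ‖(0 : 𝕜)‖ < 1))
    simpa only [norm_mul, norm_pow] using this
  refine .of_norm_bounded_eventually_nat
    (summable_geometric_of_lt_one (div_nonneg hr0 hz0.le) ((div_lt_one hz0).2 hr)) ?_
  filter_upwards [hbounded] with n hn
  calc ‖‖a n‖ * r ^ n‖ = ‖a n‖ * ‖z‖ ^ n * (r / ‖z‖) ^ n := by
        rw [Real.norm_of_nonneg (by positivity), div_pow]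
        field_simp
    _ ≤ (r / ‖z‖) ^ n := mul_le_of_le_one_left (by positivity) hn

theorem hasSum_integral_mul_tsum_mul_pow {α : Type*} {m : MeasurableSpace α} {μ : Measure α}
    {w g : α → ℂ} (hw : Integrable w μ) (hg : AEStronglyMeasurable g μ)
    (hg1 : ∀ᵐ t ∂μ, ‖g t‖ ≤ 1) {a : ℕ → ℂ} {z : ℂ} (ha : Summable fun n => ‖a n‖ * ‖z‖ ^ n) :
    HasSum (fun n => a n * z ^ n * ∫ t, w t * g t ^ n ∂μ)
      (∫ t, w t * ∑' n, a n * (z * g t) ^ n ∂μ) := by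
  set F : ℕ → α → ℂ := fun n t => w t * (a n * (z * g t) ^ n)
  have hF_le : ∀ n, ∀ᵐ t ∂μ, ‖F n t‖ ≤ ‖a n‖ * ‖z‖ ^ n * ‖w t‖ := fun n => by
    filter_upwards [hg1] with t ht
    calc ‖F n t‖ = ‖a n‖ * ‖z‖ ^ n * ‖w t‖ * ‖g t‖ ^ n := by
          simp only [F, norm_mul, norm_pow]; ring
      _ ≤ ‖a n‖ * ‖z‖ ^ n * ‖w t‖ :=
          mul_le_of_le_one_right (by positivity) (pow_le_one₀ (norm_nonneg _) ht)
  have hF_int : ∀ n, Integrable (F n) μ := fun n =>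
    (hw.norm.const_mul _).mono'
      (hw.aestronglyMeasurable.mul (((hg.const_mul z).pow n).const_mul (a n))) (hF_le n)
  have hF_summable : Summable fun n => ∫ t, ‖F n t‖ ∂μ := by
    refine .of_nonneg_of_le (fun n => integral_nonneg fun t => norm_nonneg _) (fun n => ?_)
      (ha.mul_right (∫ t, ‖w t‖ ∂μ))
    rw [← integral_const_mul]
    exact integral_mono_ae (hF_int n).norm (hw.norm.const_mul _) (hF_le n)
  have hF_integral : ∀ n, ∫ t, F n t ∂μ = a n * z ^ n * ∫ t, w t * g t ^ n ∂μ := fun n => by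
    rw [← integral_const_mul]
    congr with t
    simp only [F, mul_pow]
    ring
  have hF_tsum : ∀ t, ∑' n, F n t = w t * ∑' n, a n * (z * g t) ^ n := fun t => tsum_mul_left
  simpa only [hF_integral, hF_tsum] using
    hasSum_integral_of_summable_integral_norm hF_int hF_summable

/-- integral representation of the hypergeometric transfer
operator `θ(xⁿ) = ((γ)ₙ/(δ)ₙ) xⁿ` applied to an analytic function on the unit
disc. -/
theorem hypergeometric_transfer_integral_rep
    (γ δ : ℂ) (hγ : 0 < γ.re) (hγδ : γ.re < δ.re)
    (a : ℕ → ℂ) (hconv : ∀ z : ℂ, ‖z‖ < 1 → Summable (fun n => a n * z ^ n))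
    (x : ℝ) (hx : |x| < 1) :
    HasSum (fun n => a n * (cpoch γ n / cpoch δ n) * (x : ℂ) ^ n)
      ((cbeta γ (δ - γ))⁻¹ *
        ∫ t in (0:ℝ)..1, (t : ℂ) ^ (γ - 1) * ((1 - t : ℝ) : ℂ) ^ (δ - γ - 1) *
          ∑' n, a n * ((x * t : ℝ) : ℂ) ^ n) := by
  have hδγ : 0 < (δ - γ).re := by rw [Complex.sub_re]; linarith
  obtain ⟨r, hxr, hr1⟩ := exists_between hx
  have hr : ‖(r : ℂ)‖ = r := by
    rw [Complex.norm_real, Real.norm_of_nonneg ((abs_nonneg x).trans hxr.le)]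
  have ha : Summable fun n => ‖a n‖ * ‖(x : ℂ)‖ ^ n := by
    rw [Complex.norm_real, Real.norm_eq_abs]
    exact summable_norm_mul_pow_of_summable_mul_pow (hconv r (by rwa [hr]))
      (abs_nonneg x) (by rwa [hr])
  have hunit : ∀ᵐ t : ℝ ∂(volume.restrict (Ioc (0 : ℝ) 1)), ‖(t : ℂ)‖ ≤ 1 := by
    filter_upwards [ae_restrict_mem measurableSet_Ioc] with t ht
    rw [Complex.norm_real, Real.norm_of_nonneg ht.1.le]
    exact ht.2
  have key := hasSum_integral_mul_tsum_mul_pow (Complex.integrableOn_betaIntegrand hγ hδγ)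
    Complex.continuous_ofReal.aestronglyMeasurable hunit ha
  simp_rw [← Complex.betaIntegral_add_nat_eq_setIntegral, Complex.betaIntegral_add_nat hγ hδγ,
    add_sub_cancel] at key
  rw [cbeta_eq_betaIntegral hγ hδγ, intervalIntegral.integral_of_le zero_le_one]
  simp only [Complex.ofReal_mul]
  set B := Complex.betaIntegral γ (δ - γ)
  have hB : B ≠ 0 := Complex.betaIntegral_ne_zero hγ hδγ
  have hterm : (fun n => a n * (cpoch γ n / cpoch δ n) * (x : ℂ) ^ n) =
      fun n => B⁻¹ * (a n * x ^ n * (cpoch γ n / cpoch δ n * B)) :=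
    funext fun n => by field_simp
  rw [hterm]
  exact key.mul_left _
end

section
/- Let \mu_1, \mu_2 be real numbers with -1/2 < \mu_1 < \mu_2. Then for every n \in \mathbb{N}, \int_{-1}^{1} t^n |t|^{2\mu_1} (1-t)^{\mu_2-\mu_1-1} (1+t)^{\mu_2-\mu_1} \, dt = \beta(\mu_1 + 1/2, \mu_2 - \mu_1) \cdot \gamma_{\mu_1}(n)/\gamma_{\mu_2}(n). -/
/-!
Reflecting `[-1, 0]` onto `[0, 1]` pairs `t` with `-t`; since
`tⁿ (1 + t) + (-t)ⁿ (1 - t) = 2 t^(2k)` with `k = ⌈n/2⌉`, the integrand becomes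
`2t · (t²)^(μ₁ + 1/2 + k - 1) (1 - t²)^(μ₂ - μ₁ - 1)`, and `u = t²` turns the integral into
`β(μ₁ + 1/2 + k, μ₂ - μ₁)`. Shifting the first argument of `β` by one multiplies it by
`x / (x + y)`, so `β(c + k, a) = β(c, a) ∏_{i<k} (c + i)/(c + a + i)`, and this product is
exactly `γ_{μ₁}(n) / γ_{μ₂}(n)`.
-/

open Finset

/-- The Dunkl generalized factorial: `γ_μ(2p+ε) = 2^(2p+ε) p! (μ+1/2)_{p+ε}`
for `ε ∈ {0,1}`. -/
noncomputable def dunklGamma (μ : ℝ) (n : ℕ) : ℝ :=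
  2 ^ n * (Nat.factorial (n / 2) : ℝ) *
    ∏ i ∈ Finset.range (n / 2 + n % 2), (μ + 1 / 2 + i)

/-- Euler's Beta function `β(x,y) = Γ(x)Γ(y)/Γ(x+y)`. -/
noncomputable def realBeta (x y : ℝ) : ℝ :=
  Real.Gamma x * Real.Gamma y / Real.Gamma (x + y)

open MeasureTheory

theorem pow_mul_one_add_add_neg_pow_mul_one_sub {R : Type*} [CommRing R] (x : R) (n : ℕ) :
    x ^ n * (1 + x) + (-x) ^ n * (1 - x) = 2 * x ^ (2 * (n / 2 + n % 2)) := by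
  obtain ⟨m, rfl | rfl⟩ := Nat.even_or_odd' n
  · rw [Even.neg_pow ⟨m, two_mul m⟩]
    have : 2 * m / 2 + 2 * m % 2 = m := by omega
    rw [this]; ring
  · rw [Odd.neg_pow ⟨m, rfl⟩]
    have : (2 * m + 1) / 2 + (2 * m + 1) % 2 = m + 1 := by omega
    rw [this]; ring

theorem Complex.ofReal_rpow_mul_one_sub_rpow {x : ℝ} (hx : x ∈ Set.Icc 0 1) (α β : ℝ) :
    ((x ^ α * (1 - x) ^ β : ℝ) : ℂ) = (x : ℂ) ^ (α : ℂ) * (1 - (x : ℂ)) ^ (β : ℂ) := by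
  rw [ofReal_mul, ofReal_cpow hx.1, ofReal_cpow (sub_nonneg.2 hx.2), ofReal_sub, ofReal_one]

theorem intervalIntegrable_rpow_mul_one_sub_rpow {α β : ℝ} (hα : -1 < α) (hβ : -1 < β) :
    IntervalIntegrable (fun x : ℝ ↦ x ^ α * (1 - x) ^ β) volume 0 1 := by
  have h := Complex.betaIntegral_convergent (u := α + 1) (v := β + 1)
    (by simp; linarith) (by simp; linarith)
  simp only [add_sub_cancel_right] at h
  rw [intervalIntegrable_iff_integrableOn_Ioc_of_le zero_le_one] at h ⊢
  refine IntegrableOn.congr_fun (Integrable.re h) (fun x hx ↦ ?_) measurableSet_Ioc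
  simp only [← Complex.ofReal_rpow_mul_one_sub_rpow (Set.Ioc_subset_Icc_self hx),
    RCLike.re_to_complex, Complex.ofReal_re]

theorem integral_rpow_mul_one_sub_rpow {s t : ℝ} (hs : 0 < s) (ht : 0 < t) :
    ∫ x in (0 : ℝ)..1, x ^ (s - 1) * (1 - x) ^ (t - 1) = realBeta s t := by
  have h := Complex.Gamma_mul_Gamma_eq_betaIntegral (s := s) (t := t) (by simpa) (by simpa)
  have hreal : Complex.betaIntegral s t = ↑(∫ x in (0 : ℝ)..1, x ^ (s - 1) * (1 - x) ^ (t - 1)) := by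
    rw [Complex.betaIntegral, ← intervalIntegral.integral_ofReal]
    refine intervalIntegral.integral_congr fun x hx ↦ ?_
    rw [Complex.ofReal_rpow_mul_one_sub_rpow (Set.uIcc_of_le (zero_le_one (α := ℝ)) ▸ hx)]
    push_cast
    rfl
  rw [hreal, ← Complex.ofReal_add, Complex.Gamma_ofReal, Complex.Gamma_ofReal,
    Complex.Gamma_ofReal] at h
  have hst : Real.Gamma (s + t) ≠ 0 := (Real.Gamma_pos_of_pos (by linarith)).ne'
  rw [realBeta, eq_div_iff hst, mul_comm]
  exact_mod_cast h.symm

theorem realBeta_add_one {x y : ℝ} (hx : x ≠ 0) (hxy : x + y ≠ 0) :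
    realBeta (x + 1) y = realBeta x y * (x / (x + y)) := by
  rw [realBeta, realBeta, add_right_comm, Real.Gamma_add_one hx, Real.Gamma_add_one hxy]
  field_simp

theorem realBeta_add_nat {x y : ℝ} (hx : 0 < x) (hxy : 0 < x + y) (k : ℕ) :
    realBeta (x + k) y = realBeta x y * ∏ i ∈ range k, (x + i) / (x + y + i) := by
  induction k with
  | zero => simp
  | succ k ih =>
    have hk : (0 : ℝ) ≤ k := k.cast_nonneg
    rw [Nat.cast_succ, ← add_assoc, realBeta_add_one (by positivity) (by linarith), ih,
      prod_range_succ, add_right_comm x, mul_assoc]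

theorem dunklGamma_div_dunklGamma (μ ν : ℝ) (n : ℕ) :
    dunklGamma μ n / dunklGamma ν n =
      ∏ i ∈ range (n / 2 + n % 2), (μ + 1 / 2 + i) / (ν + 1 / 2 + i) := by
  rw [dunklGamma, dunklGamma, prod_div_distrib, mul_div_mul_left]
  positivity

theorem intervalIntegral.integral_neg_eq_integral_add_comp_neg {E : Type*} [NormedAddCommGroup E]
    [NormedSpace ℝ E] {f : ℝ → E} {a : ℝ} (hf : IntervalIntegrable f volume 0 a)
    (hf_neg : IntervalIntegrable (fun x ↦ f (-x)) volume 0 a) :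
    ∫ x in -a..a, f x = ∫ x in 0..a, (f x + f (-x)) := by
  have hf_left : IntervalIntegrable f volume (-a) 0 := by
    simpa using ((IntervalIntegrable.iff_comp_neg).mp hf_neg).symm
  rw [← integral_add_adjacent_intervals hf_left hf, integral_add hf hf_neg, add_comm,
    integral_comp_neg]
  simp

theorem intervalIntegral.integral_comp_sq_mul_two_mul (g : ℝ → ℝ) {a b : ℝ} (ha : 0 ≤ a)
    (hb : 0 ≤ b) : ∫ x in a..b, g (x ^ 2) * (2 * x) = ∫ u in a ^ 2..b ^ 2, g u :=
  integral_comp_mul_deriv_of_deriv_nonneg (f := fun x ↦ x ^ 2) (continuous_pow 2).continuousOn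
    (fun x _ ↦ by simpa using hasDerivAt_pow 2 x)
    (fun x hx ↦ by linarith [hx.1, le_min ha hb])

noncomputable def dunklMomentIntegrand (μ₁ μ₂ : ℝ) (n : ℕ) (t : ℝ) : ℝ :=
  t ^ n * |t| ^ (2 * μ₁) * (1 - t) ^ (μ₂ - μ₁ - 1) * (1 + t) ^ (μ₂ - μ₁)

theorem dunklMomentIntegrand_add_comp_neg (μ₁ μ₂ : ℝ) (n : ℕ) {x : ℝ} (hx : x ∈ Set.Ioo 0 1) :
    dunklMomentIntegrand μ₁ μ₂ n x + dunklMomentIntegrand μ₁ μ₂ n (-x) =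
      (x ^ 2) ^ (μ₁ + 1 / 2 + ↑(n / 2 + n % 2) - 1) * (1 - x ^ 2) ^ (μ₂ - μ₁ - 1) * (2 * x) := by
  obtain ⟨hx₀, hx₁⟩ := hx
  have h_sub : 0 < 1 - x := by linarith
  have h_add : 0 < 1 + x := by linarith
  set k := n / 2 + n % 2
  have hsq : (x ^ 2) ^ (μ₁ + 1 / 2 + k - 1) * x = x ^ (2 * μ₁) * x ^ (2 * k) := by
    rw [← Real.rpow_natCast x 2, ← Real.rpow_mul hx₀.le, ← Real.rpow_natCast x (2 * k),
      ← Real.rpow_add_one hx₀.ne', ← Real.rpow_add hx₀]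
    push_cast
    ring_nf
  have hsplit : ∀ y : ℝ, 0 < y → y ^ (μ₂ - μ₁) = y ^ (μ₂ - μ₁ - 1) * y := fun y hy ↦ by
    rw [← Real.rpow_add_one hy.ne', sub_add_cancel]
  calc dunklMomentIntegrand μ₁ μ₂ n x + dunklMomentIntegrand μ₁ μ₂ n (-x)
      = x ^ (2 * μ₁) * ((1 - x) ^ (μ₂ - μ₁ - 1) * (1 + x) ^ (μ₂ - μ₁ - 1)) *
          (x ^ n * (1 + x) + (-x) ^ n * (1 - x)) := by
        simp only [dunklMomentIntegrand, abs_neg, abs_of_pos hx₀, sub_neg_eq_add,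
          ← sub_eq_add_neg, hsplit _ h_sub, hsplit _ h_add]
        ring
    _ = (x ^ 2) ^ (μ₁ + 1 / 2 + k - 1) * (1 - x ^ 2) ^ (μ₂ - μ₁ - 1) * (2 * x) := by
        rw [pow_mul_one_add_add_neg_pow_mul_one_sub, ← Real.mul_rpow h_sub.le h_add.le,
          show (1 - x) * (1 + x) = 1 - x ^ 2 by ring]
        linear_combination -(2 * (1 - x ^ 2) ^ (μ₂ - μ₁ - 1)) * hsq

theorem intervalIntegrable_dunklMomentIntegrand {μ₁ μ₂ : ℝ} (h₁ : -(1 / 2) < μ₁) (h₂ : μ₁ < μ₂)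
    (n : ℕ) : IntervalIntegrable (dunklMomentIntegrand μ₁ μ₂ n) volume 0 1 := by
  have hcont : ContinuousOn (fun x : ℝ ↦ x ^ n * (1 + x) ^ (μ₂ - μ₁)) (Set.uIcc 0 1) :=
    (continuousOn_pow n).mul ((continuousOn_const.add continuousOn_id).rpow_const
      fun _ _ ↦ Or.inr (sub_nonneg.2 h₂.le))
  refine ((intervalIntegrable_rpow_mul_one_sub_rpow (α := 2 * μ₁) (β := μ₂ - μ₁ - 1)
    (by linarith) (by linarith)).mul_continuousOn hcont).congr_uIoo fun x hx ↦ ?_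
  rw [Set.uIoo_of_le zero_le_one] at hx
  simp only [dunklMomentIntegrand, abs_of_pos hx.1]
  ring

theorem intervalIntegrable_dunklMomentIntegrand_comp_neg {μ₁ μ₂ : ℝ} (h₁ : -(1 / 2) < μ₁)
    (h₂ : μ₁ < μ₂) (n : ℕ) :
    IntervalIntegrable (fun x ↦ dunklMomentIntegrand μ₁ μ₂ n (-x)) volume 0 1 := by
  have hcont : ContinuousOn (fun x : ℝ ↦ (-x) ^ n * (1 + x) ^ (μ₂ - μ₁ - 1)) (Set.uIcc 0 1) :=
    (continuousOn_neg.pow n).mul ((continuousOn_const.add continuousOn_id).rpow_const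
      fun x hx ↦ Or.inl (by rw [Set.uIcc_of_le zero_le_one] at hx; simp; linarith [hx.1]))
  refine ((intervalIntegrable_rpow_mul_one_sub_rpow (α := 2 * μ₁) (β := μ₂ - μ₁)
    (by linarith) (by linarith)).mul_continuousOn hcont).congr_uIoo fun x hx ↦ ?_
  rw [Set.uIoo_of_le zero_le_one] at hx
  simp only [dunklMomentIntegrand, abs_neg, abs_of_pos hx.1, sub_neg_eq_add, ← sub_eq_add_neg]
  ring

/-- for `-1/2 < μ₁ < μ₂` and every `n ∈ ℕ`,
`∫_{-1}^{1} tⁿ |t|^{2μ₁} (1-t)^{μ₂-μ₁-1} (1+t)^{μ₂-μ₁} dt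
  = β(μ₁+1/2, μ₂-μ₁) ⋅ γ_{μ₁}(n)/γ_{μ₂}(n)`. -/
theorem dunkl_moment_integral
    (μ1 μ2 : ℝ) (h1 : -(1/2) < μ1) (h2 : μ1 < μ2) (n : ℕ) :
    ∫ t in (-1:ℝ)..1,
        t ^ n * |t| ^ (2 * μ1) * (1 - t) ^ (μ2 - μ1 - 1) * (1 + t) ^ (μ2 - μ1) =
      realBeta (μ1 + 1/2) (μ2 - μ1) * (dunklGamma μ1 n / dunklGamma μ2 n) := by
  have hc : 0 < μ1 + 1 / 2 := by linarith
  have ha : 0 < μ2 - μ1 := sub_pos.2 h2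
  change ∫ t in (-1 : ℝ)..1, dunklMomentIntegrand μ1 μ2 n t = _
  rw [intervalIntegral.integral_neg_eq_integral_add_comp_neg
      (intervalIntegrable_dunklMomentIntegrand h1 h2 n)
      (intervalIntegrable_dunklMomentIntegrand_comp_neg h1 h2 n),
    intervalIntegral.integral_congr_Ioo_of_le zero_le_one fun x hx ↦
      dunklMomentIntegrand_add_comp_neg μ1 μ2 n hx,
    intervalIntegral.integral_comp_sq_mul_two_mul
      (fun u ↦ u ^ (μ1 + 1 / 2 + ↑(n / 2 + n % 2) - 1) * (1 - u) ^ (μ2 - μ1 - 1)) le_rfl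
      zero_le_one,
    zero_pow two_ne_zero, one_pow, integral_rpow_mul_one_sub_rpow (by positivity) ha,
    realBeta_add_nat hc (by linarith), dunklGamma_div_dunklGamma,
    show μ1 + 1 / 2 + (μ2 - μ1) = μ2 + 1 / 2 by ring]
end

section
/- Let (a_k^{(1)}), (b_k^{(1)}), (a_k^{(2)}), (b_k^{(2)}) be complex sequences with a_0^{(1)} \ne 0, a_0^{(2)} \ne 0 and b_k^{(1)} \ne 0, b_k^{(2)} \ne 0 for all k, and let P_n and Q_n be the associated Brenke polynomials. Suppose C : \mathbb{N} \times \mathbb{N} \to \mathbb{C} satisfies Q_n(x) = \sum_{m=0}^{n} C(m,n) P_m(x) for all n. Let A_1 = \sum_{k\ge0} a_k^{(1)} t^k and A_2 = \sum_{k\ge0} a_k^{(2)} t^k as formal power series over \mathbb{C}, and let \Theta be the linear map on formal power series rescaling the n-th coefficient by b_n^{(2)}/b_n^{(1)}. Then for every m \in \mathbb{N} and every n \ge m, the coefficient of t^n in the formal power series A_2 \cdot \Theta(t^m \cdot A_1^{-1}) equals (m!/n!) C(m,n), and for n < m this coefficient is 0. -/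
/-!
Let `L` be the linear functional on polynomials with `L(xʲ) = [tʲ](tᵐ A₁⁻¹) / b⁽¹⁾ⱼ`.
Since `Pₖ` has coefficients `k! b⁽¹⁾ⱼ a⁽¹⁾ₖ₋ⱼ`, `L(Pₖ) = k! [tᵏ](A₁ · tᵐ A₁⁻¹) = k! δₖₘ`;
likewise `L(Qₙ) = n! [tⁿ](A₂ · Θ(tᵐ A₁⁻¹))`. Applying `L` to `Qₙ = ∑ C(k,n) Pₖ` gives the claim.
-/

open Finset

/-- The Brenke polynomial `P_n(x) = n! ∑_{m=0}^{n} b_m a_{n-m} x^m` associated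
with coefficient sequences `a`, `b`. -/
noncomputable def brenke (a b : ℕ → ℂ) (n : ℕ) (x : ℂ) : ℂ :=
  (Nat.factorial n : ℂ) * ∑ m ∈ Finset.range (n + 1), b m * a (n - m) * x ^ m

open Polynomial

open scoped Nat

noncomputable def weightedCoeffSum {R : Type*} [CommSemiring R] (w : ℕ → R) : R[X] →ₗ[R] R :=
  Polynomial.lsum fun j => LinearMap.mulLeft R (w j)

@[simp]
lemma weightedCoeffSum_monomial {R : Type*} [CommSemiring R] (w : ℕ → R) (j : ℕ) (c : R) :
    weightedCoeffSum w (monomial j c) = w j * c := by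
  rw [weightedCoeffSum, lsum_apply, sum_monomial_index] <;> simp

noncomputable def brenkePoly (a b : ℕ → ℂ) (n : ℕ) : ℂ[X] :=
  ∑ m ∈ range (n + 1), monomial m ((n ! : ℂ) * (b m * a (n - m)))

lemma eval_brenkePoly (a b : ℕ → ℂ) (n : ℕ) (x : ℂ) :
    (brenkePoly a b n).eval x = brenke a b n x := by
  simp only [brenkePoly, brenke, eval_finsetSum, eval_monomial, mul_sum]
  exact sum_congr rfl fun m _ => by ring

lemma brenkePoly_connection {a1 b1 a2 b2 : ℕ → ℂ} {C : ℕ → ℕ → ℂ}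
    (hC : ∀ (n : ℕ) (x : ℂ),
      brenke a2 b2 n x = ∑ m ∈ range (n + 1), C m n * brenke a1 b1 m x) (n : ℕ) :
    brenkePoly a2 b2 n = ∑ m ∈ range (n + 1), C m n • brenkePoly a1 b1 m :=
  Polynomial.funext fun x => by
    simp [eval_finsetSum, eval_brenkePoly, hC]

lemma weightedCoeffSum_brenkePoly (w a b : ℕ → ℂ) (n : ℕ) :
    weightedCoeffSum w (brenkePoly a b n) =
      n ! * PowerSeries.coeff n (PowerSeries.mk (fun j => b j * w j) * PowerSeries.mk a) := by
  rw [PowerSeries.coeff_mul, Finset.Nat.sum_antidiagonal_eq_sum_range_succ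
    (fun i j => PowerSeries.coeff i (PowerSeries.mk _) * PowerSeries.coeff j (PowerSeries.mk a)),
    brenkePoly, map_sum, mul_sum]
  simp only [weightedCoeffSum_monomial, PowerSeries.coeff_mk]
  exact sum_congr rfl fun j _ => by ring

theorem brenke_connection_generating_function_general
    (a1 b1 a2 b2 : ℕ → ℂ)
    (ha1 : a1 0 ≠ 0)
    (hb1 : ∀ k, b1 k ≠ 0)
    (C : ℕ → ℕ → ℂ)
    (hC : ∀ (n : ℕ) (x : ℂ),
      brenke a2 b2 n x = ∑ m ∈ Finset.range (n + 1), C m n * brenke a1 b1 m x)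
    (Θ : PowerSeries ℂ →ₗ[ℂ] PowerSeries ℂ)
    (hΘ : ∀ (f : PowerSeries ℂ) (n : ℕ),
      PowerSeries.coeff n (Θ f) = (b2 n / b1 n) * PowerSeries.coeff n f)
    (m n : ℕ) :
    (m ≤ n →
      PowerSeries.coeff n
          (PowerSeries.mk a2 * Θ (PowerSeries.X ^ m * (PowerSeries.mk a1)⁻¹)) =
        (Nat.factorial m : ℂ) / (Nat.factorial n : ℂ) * C m n) ∧
    (n < m →
      PowerSeries.coeff n
          (PowerSeries.mk a2 * Θ (PowerSeries.X ^ m * (PowerSeries.mk a1)⁻¹)) = 0) := by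
  set g := PowerSeries.X ^ m * (PowerSeries.mk a1)⁻¹
  set L := weightedCoeffSum fun j => PowerSeries.coeff j g / b1 j
  have hP (k : ℕ) : L (brenkePoly a1 b1 k) = k ! * PowerSeries.coeff k (PowerSeries.X ^ m) := by
    have hg : PowerSeries.mk (fun j => b1 j * (PowerSeries.coeff j g / b1 j)) = g := by
      ext j; simp [mul_div_cancel₀ _ (hb1 j)]
    have hA1 : (PowerSeries.mk a1)⁻¹ * PowerSeries.mk a1 = 1 :=
      PowerSeries.inv_mul_cancel _ (by simpa using ha1)
    rw [weightedCoeffSum_brenkePoly, hg, mul_assoc, hA1, mul_one]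
  have hQ : L (brenkePoly a2 b2 n) = n ! * PowerSeries.coeff n (PowerSeries.mk a2 * Θ g) := by
    have hΘg : PowerSeries.mk (fun j => b2 j * (PowerSeries.coeff j g / b1 j)) = Θ g := by
      ext j; rw [PowerSeries.coeff_mk, hΘ]; ring
    rw [weightedCoeffSum_brenkePoly, hΘg, mul_comm (Θ g)]
  have key : (n ! : ℂ) * PowerSeries.coeff n (PowerSeries.mk a2 * Θ g) =
      if m ≤ n then C m n * m ! else 0 := by
    rw [← hQ, brenkePoly_connection hC, map_sum]
    simp only [map_smul, hP, PowerSeries.coeff_X_pow, smul_eq_mul, mul_ite, mul_one, mul_zero,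
      sum_ite_eq', mem_range, Nat.lt_succ_iff]
  have hn : (n ! : ℂ) ≠ 0 := Nat.cast_ne_zero.mpr n.factorial_ne_zero
  refine ⟨fun hmn => ?_, fun hnm => ?_⟩
  · rw [if_pos hmn] at key
    field_simp
    linear_combination key
  · rw [if_neg (by omega)] at key
    exact (mul_eq_zero.mp key).resolve_left hn

/-- generating function for the connection coefficients between
two Brenke polynomial sets.  If `Q_n = ∑_{m≤n} C(m,n) P_m` then the coefficient
of `tⁿ` in `A₂(t)·Θ(tᵐ/A₁(t))` equals `(m!/n!) C(m,n)` for `n ≥ m`, and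
vanishes for `n < m`, where `Θ` rescales the `n`-th coefficient of a formal
power series by `b₂ₙ/b₁ₙ`. -/
theorem brenke_connection_generating_function
    (a1 b1 a2 b2 : ℕ → ℂ)
    (ha1 : a1 0 ≠ 0) (ha2 : a2 0 ≠ 0)
    (hb1 : ∀ k, b1 k ≠ 0) (hb2 : ∀ k, b2 k ≠ 0)
    (C : ℕ → ℕ → ℂ)
    (hC : ∀ (n : ℕ) (x : ℂ),
      brenke a2 b2 n x = ∑ m ∈ Finset.range (n + 1), C m n * brenke a1 b1 m x)
    (Θ : PowerSeries ℂ →ₗ[ℂ] PowerSeries ℂ)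
    (hΘ : ∀ (f : PowerSeries ℂ) (n : ℕ),
      PowerSeries.coeff n (Θ f) = (b2 n / b1 n) * PowerSeries.coeff n f)
    (m n : ℕ) :
    (m ≤ n →
      PowerSeries.coeff n
          (PowerSeries.mk a2 * Θ (PowerSeries.X ^ m * (PowerSeries.mk a1)⁻¹)) =
        (Nat.factorial m : ℂ) / (Nat.factorial n : ℂ) * C m n) ∧
    (n < m →
      PowerSeries.coeff n
          (PowerSeries.mk a2 * Θ (PowerSeries.X ^ m * (PowerSeries.mk a1)⁻¹)) = 0) :=
  brenke_connection_generating_function_general a1 b1 a2 b2 ha1 hb1 C hC Θ hΘ m n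
end

section
/- Let (a_k^{(1)}), (b_k^{(1)}), (a_k^{(2)}), (b_k^{(2)}) be complex sequences with a_0^{(1)} \ne 0, a_0^{(2)} \ne 0 and b_k^{(1)} \ne 0, b_k^{(2)} \ne 0 for all k, let P_n and Q_n be the associated Brenke polynomials, and let (\hat{a}_k^{(1)}) be the coefficients of the reciprocal power series of A_1(t) = \sum a_k^{(1)} t^k. Then for all n and all x, Q_n(x) = \sum_{m=0}^{n} C_m(n) P_m(x), where C_m(n) = (n!/m!) \sum_{k=0}^{n-m} (b_{n-k}^{(2)}/b_{n-k}^{(1)}) a_k^{(2)} \hat{a}_{n-m-k}^{(1)}. -/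
open Finset

/-!
Write `c_k = (b²_{n-k} / b¹_{n-k}) a²_k`, so that `C_m(n) m! / n!` is the coefficient of
`t^{n-m}` in `C(t) Â₁(t)`. Expanding each `P_m` and collecting powers of `x`, the coefficient of
`x^j` on the right is `n! b¹_j` times the coefficient of `t^{n-j}` in `A₁(t) C(t) Â₁(t) = C(t)`,
that is `n! b¹_j c_{n-j} = n! b²_j a²_{n-j}`, the coefficient of `x^j` in `Q_n`.
-/

open PowerSeries

theorem PowerSeries.coeff_mk_mul_mk {R : Type*} [CommSemiring R] (f g : ℕ → R) (N : ℕ) :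
    coeff N (mk f * mk g) = ∑ k ∈ range (N + 1), f k * g (N - k) := by
  simp only [coeff_mul, coeff_mk, Nat.sum_antidiagonal_eq_sum_range_succ fun i j => f i * g j]

theorem PowerSeries.mk_mul_mk_eq_one {K : Type*} [Field K] {a ahat : ℕ → K} (ha : a 0 ≠ 0)
    (hhat0 : ahat 0 = 1 / a 0)
    (hhat : ∀ n : ℕ, 1 ≤ n → ∑ k ∈ range (n + 1), a k * ahat (n - k) = 0) :
    mk a * mk ahat = 1 := by
  ext N
  rw [coeff_mk_mul_mk, coeff_one]
  rcases N with _ | N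
  · simp [hhat0, ha]
  · simpa using hhat (N + 1) N.succ_pos

theorem PowerSeries.sum_mul_sum_mul_eq_of_mk_mul_mk_eq_one {R : Type*} [CommSemiring R]
    {a ahat : ℕ → R} (h : mk a * mk ahat = 1) (c : ℕ → R) (N : ℕ) :
    ∑ s ∈ range (N + 1), a s * ∑ k ∈ range (N - s + 1), c k * ahat (N - s - k) = c N := by
  have hc : mk c * mk ahat = mk fun M => ∑ k ∈ range (M + 1), c k * ahat (M - k) := by
    ext M
    rw [coeff_mk_mul_mk, coeff_mk]
  have := congrArg (coeff N) (mul_left_comm (mk a) (mk c) (mk ahat))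
  rwa [h, mul_one, hc, coeff_mk_mul_mk, coeff_mk] at this

theorem Finset.sum_range_sum_range_eq_sum_range_sum_range_sub {M : Type*} [AddCommMonoid M]
    (n : ℕ) (f : ℕ → ℕ → M) :
    ∑ m ∈ range (n + 1), ∑ j ∈ range (m + 1), f j m
      = ∑ j ∈ range (n + 1), ∑ s ∈ range (n - j + 1), f j (j + s) := by
  rw [sum_comm' (t' := range (n + 1)) (s' := fun j => Ico j (n + 1))
    (fun m j => by simp only [mem_range, mem_Ico]; omega)]
  refine sum_congr rfl fun j hj => ?_
  rw [sum_Ico_eq_sum_range, show n + 1 - j = n - j + 1 by grind]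

theorem brenke_connection_explicit_general
    (a1 b1 a2 b2 : ℕ → ℂ)
    (ha1 : a1 0 ≠ 0)
    (hb1 : ∀ k, b1 k ≠ 0)
    (ahat : ℕ → ℂ) (hhat0 : ahat 0 = 1 / a1 0)
    (hhat : ∀ n : ℕ, 1 ≤ n → ∑ k ∈ Finset.range (n + 1), a1 k * ahat (n - k) = 0)
    (n : ℕ) (x : ℂ) :
    brenke a2 b2 n x =
      ∑ m ∈ Finset.range (n + 1),
        ((Nat.factorial n : ℂ) / (Nat.factorial m : ℂ) *
            ∑ k ∈ Finset.range (n - m + 1),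
              (b2 (n - k) / b1 (n - k)) * a2 k * ahat (n - m - k)) *
          brenke a1 b1 m x := by
  set c : ℕ → ℂ := fun k => b2 (n - k) / b1 (n - k) * a2 k
  set S : ℕ → ℂ := fun m => ∑ k ∈ range (n - m + 1), c k * ahat (n - m - k)
  have hinv := mk_mul_mk_eq_one ha1 hhat0 hhat
  calc brenke a2 b2 n x
      = n.factorial * ∑ j ∈ range (n + 1),
          ∑ s ∈ range (n - j + 1), S (j + s) * (b1 j * a1 s * x ^ j) := by
        refine congrArg _ (sum_congr rfl fun j hj => ?_)
        have hjn : n - (n - j) = j := Nat.sub_sub_self (mem_range_succ_iff.mp hj)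
        have hS := sum_mul_sum_mul_eq_of_mk_mul_mk_eq_one hinv c (n - j)
        calc b2 j * a2 (n - j) * x ^ j = b1 j * x ^ j * c (n - j) := by
              simp only [c, hjn]
              field_simp [hb1 j]
          _ = b1 j * x ^ j * ∑ s ∈ range (n - j + 1), a1 s * S (j + s) := by
              rw [← hS]
              simp only [S, Nat.sub_sub]
          _ = _ := by
              rw [mul_sum]
              exact sum_congr rfl fun s _ => by ring
    _ = n.factorial * ∑ m ∈ range (n + 1),
          S m * ∑ j ∈ range (m + 1), b1 j * a1 (m - j) * x ^ j := by
        simp only [mul_sum, sum_range_sum_range_eq_sum_range_sum_range_sub n,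
          Nat.add_sub_cancel_left]
    _ = _ := by
        rw [mul_sum]
        refine sum_congr rfl fun m _ => ?_
        have hm : (m.factorial : ℂ) ≠ 0 := Nat.cast_ne_zero.mpr m.factorial_ne_zero
        simp only [brenke, S, c]
        field_simp

/-- explicit expression of the connection coefficients between two
Brenke polynomial sets:
`Q_n = ∑_{m≤n} C_m(n) P_m` with
`C_m(n) = (n!/m!) ∑_{k=0}^{n-m} (b₂_{n-k}/b₁_{n-k}) a₂ₖ â₁_{n-m-k}`,
where `(âₖ)` are the coefficients of the reciprocal of `A₁`. -/
theorem brenke_connection_explicit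
    (a1 b1 a2 b2 : ℕ → ℂ)
    (ha1 : a1 0 ≠ 0) (ha2 : a2 0 ≠ 0)
    (hb1 : ∀ k, b1 k ≠ 0) (hb2 : ∀ k, b2 k ≠ 0)
    (ahat : ℕ → ℂ) (hhat0 : ahat 0 = 1 / a1 0)
    (hhat : ∀ n : ℕ, 1 ≤ n → ∑ k ∈ Finset.range (n + 1), a1 k * ahat (n - k) = 0)
    (n : ℕ) (x : ℂ) :
    brenke a2 b2 n x =
      ∑ m ∈ Finset.range (n + 1),
        ((Nat.factorial n : ℂ) / (Nat.factorial m : ℂ) *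
            ∑ k ∈ Finset.range (n - m + 1),
              (b2 (n - k) / b1 (n - k)) * a2 k * ahat (n - m - k)) *
          brenke a1 b1 m x :=
  brenke_connection_explicit_general a1 b1 a2 b2 ha1 hb1 ahat hhat0 hhat n x
end

section
/- Let (a_k)_{k\ge0} and (b_k)_{k\ge0} be complex sequences with a_0 \ne 0 and b_k \ne 0 for all k, let P_n be the associated Brenke polynomials, and let a \in \mathbb{C} with a \ne 0. Let (\beta_k) be the coefficients of the quotient power series A(t)/A(at), i.e. \sum_{j=0}^{k} a_j a^j \beta_{k-j} = a_k for all k. Then the duplication formula holds: for all n and all x, P_n(ax) = \sum_{m=0}^{n} (n!/m!) a^m \beta_{n-m} P_m(x). -/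
open Finset

/-!
The exponential generating function of the Brenke polynomials is `B(xt) A(t)`. Writing
`A(t) = A(αt) β(t)`, the generating function at `αx` becomes `B(xαt) A(αt) β(t)`, i.e. the
generating function at `x` rescaled by `α` times `β(t)`; comparing coefficients of `tⁿ`
gives the formula.
-/

open PowerSeries

section GenFun

variable {R : Type*} [CommSemiring R]

noncomputable def brenkeGenFun (a b : ℕ → R) (x : R) : R⟦X⟧ :=
  mk (fun m => b m * x ^ m) * mk a

theorem rescale_mk_mul_mk_eq_mk {a β : ℕ → R} {α : R}
    (hβ : ∀ k : ℕ, ∑ j ∈ range (k + 1), a j * α ^ j * β (k - j) = a k) :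
    rescale α (mk a) * mk β = mk a := by
  ext k
  rw [coeff_mul, Nat.sum_antidiagonal_eq_sum_range_succ
    (fun i j => coeff i (rescale α (mk a)) * coeff j (mk β)), coeff_mk, ← hβ k]
  refine sum_congr rfl fun j _ => ?_
  rw [coeff_rescale, coeff_mk, coeff_mk]
  ring

theorem brenkeGenFun_mul_left {a b β : ℕ → R} {α : R}
    (hβ : rescale α (mk a) * mk β = mk a) (x : R) :
    brenkeGenFun a b (α * x) = rescale α (brenkeGenFun a b x) * mk β := by
  have hB : mk (fun m => b m * (α * x) ^ m) = rescale α (mk fun m => b m * x ^ m) := by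
    ext m
    rw [coeff_rescale, coeff_mk, coeff_mk, mul_pow]
    ring
  rw [brenkeGenFun, brenkeGenFun, hB, map_mul, mul_assoc, hβ]

end GenFun

theorem brenke_eq_factorial_mul_coeff (a b : ℕ → ℂ) (n : ℕ) (x : ℂ) :
    brenke a b n x = n.factorial * coeff n (brenkeGenFun a b x) := by
  rw [brenke, brenkeGenFun, coeff_mul, Nat.sum_antidiagonal_eq_sum_range_succ
    (fun i j => coeff i (mk fun m => b m * x ^ m) * coeff j (mk a))]
  congr 1
  refine sum_congr rfl fun m _ => ?_
  rw [coeff_mk, coeff_mk]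
  ring

theorem brenke_duplication_formula_general
    (a b : ℕ → ℂ)
    (α : ℂ)
    (β : ℕ → ℂ)
    (hβ : ∀ k : ℕ, ∑ j ∈ Finset.range (k + 1), a j * α ^ j * β (k - j) = a k)
    (n : ℕ) (x : ℂ) :
    brenke a b n (α * x) =
      ∑ m ∈ Finset.range (n + 1),
        (Nat.factorial n : ℂ) / (Nat.factorial m : ℂ) * α ^ m * β (n - m) *
          brenke a b m x := by
  rw [brenke_eq_factorial_mul_coeff, brenkeGenFun_mul_left (rescale_mk_mul_mk_eq_mk hβ),
    coeff_mul, Nat.sum_antidiagonal_eq_sum_range_succ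
      (fun i j => coeff i (rescale α (brenkeGenFun a b x)) * coeff j (mk β)), mul_sum]
  refine sum_congr rfl fun m _ => ?_
  have hm : (m.factorial : ℂ) ≠ 0 := by exact_mod_cast m.factorial_ne_zero
  rw [coeff_rescale, coeff_mk, brenke_eq_factorial_mul_coeff]
  field_simp

/-- duplication formula for Brenke polynomials:
`P_n(ax) = ∑_{m=0}^{n} (n!/m!) a^m β_{n-m} P_m(x)`, where `(βₖ)` are the
coefficients of the quotient power series `A(t)/A(at)`. -/
theorem brenke_duplication_formula
    (a b : ℕ → ℂ) (ha : a 0 ≠ 0) (hb : ∀ k, b k ≠ 0)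
    (α : ℂ) (hα : α ≠ 0)
    (β : ℕ → ℂ)
    (hβ : ∀ k : ℕ, ∑ j ∈ Finset.range (k + 1), a j * α ^ j * β (k - j) = a k)
    (n : ℕ) (x : ℂ) :
    brenke a b n (α * x) =
      ∑ m ∈ Finset.range (n + 1),
        (Nat.factorial n : ℂ) / (Nat.factorial m : ℂ) * α ^ m * β (n - m) *
          brenke a b m x :=
  brenke_duplication_formula_general a b α β hβ n x
end

section
/- Let d \ge 1 be an integer, a, b \in \mathbb{C}, and \mu_1, \mu_2 > -1/2. Then for all n \in \mathbb{N} and all x, Q_n^{(d+1)}(x, b, \mu_2) = \sum_{i=0}^{\lfloor n/(d+1) \rfloor} C_{n-i(d+1)}(n) \, Q_{n-i(d+1)}^{(d+1)}(x, a, \mu_1), where C_{n-i(d+1)}(n) = (n!/(n-i(d+1))!) \sum_{k=0}^{i} (\gamma_{\mu_1}(n-k(d+1))/\gamma_{\mu_2}(n-k(d+1))) \cdot ((-a)^{i-k}/(i-k)!) \cdot (b^k/k!). -/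
open Finset

/-- The generalized Gould–Hopper polynomial
`Q_n^{(d+1)}(x,a,μ) = n! ∑_{k=0}^{⌊n/(d+1)⌋} a^k x^{n-(d+1)k} / (k! γ_μ(n-(d+1)k))`. -/
noncomputable def gghQ (d : ℕ) (a : ℂ) (μ : ℝ) (n : ℕ) (x : ℂ) : ℂ :=
  (Nat.factorial n : ℂ) *
    ∑ k ∈ Finset.range (n / (d + 1) + 1),
      a ^ k * x ^ (n - (d + 1) * k) /
        ((Nat.factorial k : ℂ) * ((dunklGamma μ (n - (d + 1) * k) : ℝ) : ℂ))

/-!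
Both sides are `n! ∑_s c_s x^{n-(d+1)s} / γ_{μ1}(n-(d+1)s)` for coefficients `c_s` of a power
series in an auxiliary variable `t`. On the right, the inner sum over `k` is the `i`-th coefficient
of `F(t) e^{-at}` with `F(t) = ∑_k (γ_{μ1}/γ_{μ2})(n-(d+1)k) b^k t^k / k!`, and expanding
`Q_{n-i(d+1)}(x, a, μ1)` multiplies this by `e^{at}` (a truncated Cauchy product). The exponentials
cancel, and the coefficients of `F` are exactly those of `Q_n(x, b, μ2)`.
-/

open PowerSeries

lemma dunklGamma_pos {μ : ℝ} (hμ : -(1/2) < μ) (n : ℕ) : 0 < dunklGamma μ n := by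
  refine mul_pos (by positivity) (prod_pos fun i _ => ?_)
  have : (0 : ℝ) ≤ i := Nat.cast_nonneg i
  linarith

lemma PowerSeries.coeff_rescale_exp {K : Type*} [Field K] [CharZero K] (a : K) (k : ℕ) :
    coeff k (rescale a (exp K)) = a ^ k / k.factorial := by
  simp [coeff_rescale, div_eq_mul_inv]

lemma PowerSeries.rescale_neg_exp_mul_rescale_exp {A : Type*} [CommRing A] [Algebra ℚ A] (a : A) :
    rescale (-a) (exp A) * rescale a (exp A) = 1 := by
  rw [exp_mul_exp_eq_exp_add, neg_add_cancel, rescale_zero_apply, constantCoeff_exp, map_one]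

lemma PowerSeries.sum_range_coeff_mul_sum_range_sub {R : Type*} [CommSemiring R]
    (N : ℕ) (φ ψ : R⟦X⟧) (u : ℕ → R) :
    ∑ i ∈ range (N + 1), coeff i φ * ∑ j ∈ range (N - i + 1), coeff j ψ * u (i + j) =
      ∑ s ∈ range (N + 1), coeff s (φ * ψ) * u s := by
  simp_rw [coeff_mul, Nat.sum_antidiagonal_eq_sum_range_succ_mk, sum_mul]
  have hdiag : ∀ s ∈ range (N + 1), ∑ k ∈ range (s + 1), coeff k φ * coeff (s - k) ψ * u s =
      ∑ k ∈ range (s + 1), coeff k φ * coeff (s - k) ψ * u (k + (s - k)) :=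
    fun s _ => sum_congr rfl fun k hk => by rw [Nat.add_sub_cancel' (mem_range_succ_iff.1 hk)]
  rw [sum_congr rfl hdiag,
    sum_range_diag_flip (N + 1) fun k j => coeff k φ * coeff j ψ * u (k + j)]
  refine sum_congr rfl fun i hi => ?_
  rw [mul_sum, Nat.sub_add_comm (mem_range_succ_iff.1 hi)]
  exact sum_congr rfl fun j _ => (mul_assoc _ _ _).symm

lemma gghQ_sub_mul (d : ℕ) (a : ℂ) (μ : ℝ) (n i : ℕ) (x : ℂ) :
    gghQ d a μ (n - i * (d + 1)) x = (n - i * (d + 1)).factorial *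
      ∑ j ∈ range (n / (d + 1) - i + 1), coeff j (rescale a (exp ℂ)) *
        (x ^ (n - (d + 1) * (i + j)) / dunklGamma μ (n - (d + 1) * (i + j))) := by
  rw [gghQ, mul_comm i, Nat.sub_mul_div]
  refine congrArg _ (sum_congr rfl fun j _ => ?_)
  rw [coeff_rescale_exp, Nat.sub_sub, ← mul_add, div_mul_div_comm]

lemma sum_coeff_mul_gghQ_sub (d : ℕ) (a : ℂ) (μ : ℝ) (n : ℕ) (x : ℂ) (φ : ℂ⟦X⟧) :
    ∑ i ∈ range (n / (d + 1) + 1),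
        ((n.factorial : ℂ) / (n - i * (d + 1)).factorial * coeff i φ) *
          gghQ d a μ (n - i * (d + 1)) x =
      n.factorial * ∑ s ∈ range (n / (d + 1) + 1), coeff s (φ * rescale a (exp ℂ)) *
        (x ^ (n - (d + 1) * s) / dunklGamma μ (n - (d + 1) * s)) := by
  rw [← sum_range_coeff_mul_sum_range_sub, mul_sum]
  refine sum_congr rfl fun i _ => ?_
  rw [gghQ_sub_mul]
  have : ((n - i * (d + 1)).factorial : ℂ) ≠ 0 := Nat.cast_ne_zero.2 (Nat.factorial_ne_zero _)
  field_simp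

theorem gghQ_connection_general
    (d : ℕ) (a b : ℂ) (μ1 μ2 : ℝ)
    (h1 : -(1/2) < μ1)
    (n : ℕ) (x : ℂ) :
    gghQ d b μ2 n x =
      ∑ i ∈ Finset.range (n / (d + 1) + 1),
        ((Nat.factorial n : ℂ) / (Nat.factorial (n - i * (d + 1)) : ℂ) *
            ∑ k ∈ Finset.range (i + 1),
              ((dunklGamma μ1 (n - k * (d + 1)) / dunklGamma μ2 (n - k * (d + 1)) : ℝ) : ℂ) *
                ((-a) ^ (i - k) / (Nat.factorial (i - k) : ℂ)) *
                (b ^ k / (Nat.factorial k : ℂ))) *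
          gghQ d a μ1 (n - i * (d + 1)) x := by
  set F : ℂ⟦X⟧ := mk fun k =>
    ((dunklGamma μ1 (n - k * (d + 1)) / dunklGamma μ2 (n - k * (d + 1)) : ℝ) : ℂ) *
      (b ^ k / k.factorial)
  have hF : ∀ i, ∑ k ∈ range (i + 1),
      ((dunklGamma μ1 (n - k * (d + 1)) / dunklGamma μ2 (n - k * (d + 1)) : ℝ) : ℂ) *
        ((-a) ^ (i - k) / (i - k).factorial) * (b ^ k / k.factorial) =
      coeff i (F * rescale (-a) (exp ℂ)) := by
    intro i
    rw [coeff_mul, Nat.sum_antidiagonal_eq_sum_range_succ_mk]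
    refine sum_congr rfl fun k _ => ?_
    rw [coeff_mk, coeff_rescale_exp]
    ring
  simp_rw [hF]
  rw [sum_coeff_mul_gghQ_sub, mul_assoc, rescale_neg_exp_mul_rescale_exp, mul_one, gghQ]
  refine congrArg _ (sum_congr rfl fun s _ => ?_)
  have : (dunklGamma μ1 (n - (d + 1) * s) : ℂ) ≠ 0 :=
    Complex.ofReal_ne_zero.2 (dunklGamma_pos h1 _).ne'
  rw [coeff_mk, mul_comm s]
  push_cast
  field_simp

/-- connection formula between two generalized Gould–Hopper
polynomial sets. -/
theorem gghQ_connection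
    (d : ℕ) (hd : 1 ≤ d) (a b : ℂ) (μ1 μ2 : ℝ)
    (h1 : -(1/2) < μ1) (h2 : -(1/2) < μ2)
    (n : ℕ) (x : ℂ) :
    gghQ d b μ2 n x =
      ∑ i ∈ Finset.range (n / (d + 1) + 1),
        ((Nat.factorial n : ℂ) / (Nat.factorial (n - i * (d + 1)) : ℂ) *
            ∑ k ∈ Finset.range (i + 1),
              ((dunklGamma μ1 (n - k * (d + 1)) / dunklGamma μ2 (n - k * (d + 1)) : ℝ) : ℂ) *
                ((-a) ^ (i - k) / (Nat.factorial (i - k) : ℂ)) *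
                (b ^ k / (Nat.factorial k : ℂ))) *
          gghQ d a μ1 (n - i * (d + 1)) x :=
  gghQ_connection_general d a b μ1 μ2 h1 n x
end

section
/- Let d \ge 1 be an integer, a \in \mathbb{C}, and \mu > -1/2. Then the inversion formula for the generalized Gould–Hopper polynomials holds: for all n \in \mathbb{N} and all x, x^n / \gamma_\mu(n) = \sum_{k=0}^{\lfloor n/(d+1) \rfloor} ((-a)^k / (k! (n-(d+1)k)!)) \, Q_{n-(d+1)k}^{(d+1)}(x, a, \mu). -/
open Finset

open Nat

/-!
Writing `c m = x^(n-(d+1)m) / γ_μ(n-(d+1)m)`, the definition gives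
`Q_{n-(d+1)k}(x) / (n-(d+1)k)! = ∑_j a^j/j! · c(k+j)`. Regrouping the double sum along
`m = k + j`, the inner sums are the truncated Cauchy product of `e^{-a}` and `e^{a}`,
i.e. `(-a + a)^m / m!`, so only the term `m = 0`, namely `c 0 = xⁿ/γ_μ(n)`, survives.
-/

section Inversion

variable {K : Type*} [Field K] [CharZero K]

theorem add_pow_div_factorial (x y : K) (m : ℕ) :
    (x + y) ^ m / m ! = ∑ k ∈ range (m + 1), x ^ k / k ! * (y ^ (m - k) / (m - k)!) := by
  rw [add_pow, sum_div]
  refine sum_congr rfl fun k hk => ?_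
  have hkm := Nat.le_of_lt_succ (mem_range.1 hk)
  have hchoose : (m.choose k : K) ≠ 0 := Nat.cast_ne_zero.2 (choose_pos hkm).ne'
  rw [← choose_mul_factorial_mul_factorial hkm]
  push_cast
  field_simp

theorem sum_neg_pow_div_factorial_mul_sum_pow_div_factorial (a : K) (c : ℕ → K) (N : ℕ) :
    ∑ k ∈ range (N + 1), (-a) ^ k / k ! * ∑ j ∈ range (N - k + 1), a ^ j / j ! * c (k + j) =
      c 0 := by
  calc _ = ∑ k ∈ range (N + 1), ∑ j ∈ range (N + 1 - k),
          (-a) ^ k / k ! * (a ^ j / j !) * c (k + j) := by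
        refine sum_congr rfl fun k hk => ?_
        rw [mul_sum, Nat.sub_add_comm (Nat.le_of_lt_succ (mem_range.1 hk))]
        simp only [mul_assoc]
    _ = ∑ m ∈ range (N + 1), ∑ k ∈ range (m + 1),
          (-a) ^ k / k ! * (a ^ (m - k) / (m - k)!) * c (k + (m - k)) :=
        (sum_range_diag_flip _ _).symm
    _ = ∑ m ∈ range (N + 1), (-a + a) ^ m / m ! * c m := by
        refine sum_congr rfl fun m _ => ?_
        rw [add_pow_div_factorial, sum_mul]
        refine sum_congr rfl fun k hk => ?_
        rw [Nat.add_sub_cancel' (Nat.le_of_lt_succ (mem_range.1 hk))]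
    _ = c 0 := by simp [sum_range_succ']

end Inversion

theorem gghQ_sub_mul_eq_factorial_mul_sum (d : ℕ) (a : ℂ) (μ : ℝ) (n k : ℕ) (x : ℂ) :
    gghQ d a μ (n - (d + 1) * k) x = (n - (d + 1) * k)! *
      ∑ j ∈ range (n / (d + 1) - k + 1), a ^ j / j ! *
        (x ^ (n - (d + 1) * (k + j)) / dunklGamma μ (n - (d + 1) * (k + j))) := by
  rw [gghQ, Nat.sub_mul_div]
  congr 1
  refine sum_congr rfl fun j _ => ?_
  rw [Nat.sub_sub, ← Nat.mul_add]
  ring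

theorem gghQ_inversion_general
    (d : ℕ) (a : ℂ) (μ : ℝ)
    (n : ℕ) (x : ℂ) :
    x ^ n / ((dunklGamma μ n : ℝ) : ℂ) =
      ∑ k ∈ Finset.range (n / (d + 1) + 1),
        (-a) ^ k /
            ((Nat.factorial k : ℂ) * (Nat.factorial (n - (d + 1) * k) : ℂ)) *
          gghQ d a μ (n - (d + 1) * k) x := by
  have hc := sum_neg_pow_div_factorial_mul_sum_pow_div_factorial a
    (fun m => x ^ (n - (d + 1) * m) / dunklGamma μ (n - (d + 1) * m)) (n / (d + 1))
  simp only [mul_zero, Nat.sub_zero] at hc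
  rw [← hc]
  refine sum_congr rfl fun k _ => ?_
  have hfact : ((n - (d + 1) * k)! : ℂ) ≠ 0 := Nat.cast_ne_zero.2 (factorial_ne_zero _)
  rw [gghQ_sub_mul_eq_factorial_mul_sum]
  field_simp

/-- inversion formula for the generalized Gould–Hopper
polynomials:
`xⁿ/γ_μ(n) = ∑_{k=0}^{⌊n/(d+1)⌋} ((-a)^k/(k!(n-(d+1)k)!)) Q_{n-(d+1)k}^{(d+1)}(x,a,μ)`. -/
theorem gghQ_inversion
    (d : ℕ) (hd : 1 ≤ d) (a : ℂ) (μ : ℝ) (hμ : -(1/2) < μ)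
    (n : ℕ) (x : ℂ) :
    x ^ n / ((dunklGamma μ n : ℝ) : ℂ) =
      ∑ k ∈ Finset.range (n / (d + 1) + 1),
        (-a) ^ k /
            ((Nat.factorial k : ℂ) * (Nat.factorial (n - (d + 1) * k) : ℂ)) *
          gghQ d a μ (n - (d + 1) * k) x :=
  gghQ_inversion_general d a μ n x
end

section
/- Let d \ge 1 be an integer, a \in \mathbb{C}, \mu > -1/2, and \alpha \in \mathbb{C} with \alpha \ne 0. Then the duplication formula for the generalized Gould–Hopper polynomials holds: for all n \in \mathbb{N} and all x, Q_n^{(d+1)}(\alpha x, a, \mu) = n! \sum_{k=0}^{\lfloor n/(d+1) \rfloor} (\alpha^{n-k(d+1)} (1-\alpha^{d+1})^k a^k / ((n-k(d+1))! \, k!)) \, Q_{n-k(d+1)}^{(d+1)}(x, a, \mu). -/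
/-!
Write `q = d + 1`. Expanding `α ^ (n - q j) = α ^ (n - q j) ((1 - α ^ q) + α ^ q) ^ j` by the binomial
theorem turns the `j`-th term of `Q_n(α x)` into a sum over `k ≤ j` whose `(k, j - k)` summand is the
`(j - k)`-th term of `Q_{n - q k}(x)` weighted by `α ^ (n - q k) (1 - α ^ q) ^ k a ^ k / k!`;
exchanging the two summations over the triangle `k + l ≤ ⌊n / q⌋` gives the formula.
-/

open Finset

open scoped Nat

section GouldHopper

variable {K : Type*} [Field K] [CharZero K] (q : ℕ) (a : K) (c : ℕ → K)

noncomputable def gouldHopperTerm (m l : ℕ) (x : K) : K :=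
  a ^ l * x ^ (m - q * l) / (l ! * c (m - q * l))

noncomputable def gouldHopper (n : ℕ) (x : K) : K :=
  n ! * ∑ k ∈ range (n / q + 1), gouldHopperTerm q a c n k x

omit [CharZero K] in
lemma pow_sub_mul_eq_sum_choose (α : K) {n j : ℕ} (hj : q * j ≤ n) :
    α ^ (n - q * j) =
      ∑ k ∈ range (j + 1), (j.choose k : K) * (1 - α ^ q) ^ k * α ^ (n - q * k) := by
  calc α ^ (n - q * j) = ((1 - α ^ q) + α ^ q) ^ j * α ^ (n - q * j) := by simp
    _ = _ := by
      rw [add_pow, sum_mul]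
      refine sum_congr rfl fun k hk ↦ ?_
      have hkj : k ≤ j := Nat.lt_succ_iff.mp (mem_range.mp hk)
      have hexp : q * (j - k) + (n - q * j) = n - q * k := by
        have := Nat.mul_le_mul_left q hkj
        rw [Nat.mul_sub]; omega
      rw [← hexp, pow_add, pow_mul]
      ring

lemma gouldHopperTerm_mul_eq_sum (α x : K) {n j : ℕ} (hj : q * j ≤ n) :
    gouldHopperTerm q a c n j (α * x) =
      ∑ k ∈ range (j + 1), α ^ (n - q * k) * (1 - α ^ q) ^ k * a ^ k / k ! *
        gouldHopperTerm q a c (n - q * k) (j - k) x := by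
  rw [gouldHopperTerm, mul_pow, pow_sub_mul_eq_sum_choose q α hj, sum_mul, mul_sum, sum_div]
  refine sum_congr rfl fun k hk ↦ ?_
  have hkj : k ≤ j := Nat.lt_succ_iff.mp (mem_range.mp hk)
  have hidx : n - q * k - q * (j - k) = n - q * j := by
    rw [Nat.sub_sub, ← Nat.mul_add, Nat.add_sub_cancel' hkj]
  have hpow : a ^ j = a ^ k * a ^ (j - k) := by rw [← pow_add, Nat.add_sub_cancel' hkj]
  have hfac : (j ! : K) ≠ 0 := Nat.cast_ne_zero.mpr j.factorial_ne_zero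
  rw [gouldHopperTerm, hidx, hpow, Nat.cast_choose K hkj]
  field_simp

theorem gouldHopper_duplication (α : K) (n : ℕ) (x : K) :
    gouldHopper q a c n (α * x) =
      n ! * ∑ k ∈ range (n / q + 1),
        α ^ (n - k * q) * (1 - α ^ q) ^ k * a ^ k / ((n - k * q)! * k !) *
          gouldHopper q a c (n - k * q) x := by
  have hle : ∀ j ∈ range (n / q + 1), q * j ≤ n := fun j hj ↦
    (Nat.mul_le_mul_left q (Nat.lt_succ_iff.mp (mem_range.mp hj))).trans (Nat.mul_div_le n q)
  rw [gouldHopper, sum_congr rfl fun j hj ↦ gouldHopperTerm_mul_eq_sum q a c α x (hle j hj),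
    sum_range_diag_flip (n / q + 1) fun k l ↦
      α ^ (n - q * k) * (1 - α ^ q) ^ k * a ^ k / k ! * gouldHopperTerm q a c (n - q * k) l x]
  congr 1
  refine sum_congr rfl fun k hk ↦ ?_
  have hkN : k ≤ n / q := Nat.lt_succ_iff.mp (mem_range.mp hk)
  have hfac : ((n - q * k)! : K) ≠ 0 := Nat.cast_ne_zero.mpr (n - q * k).factorial_ne_zero
  rw [gouldHopper, mul_comm k q, Nat.sub_mul_div, show n / q + 1 - k = n / q - k + 1 by omega,
    mul_sum, mul_sum]
  refine sum_congr rfl fun l _ ↦ ?_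
  field_simp

end GouldHopper

lemma gghQ_eq_gouldHopper (d : ℕ) (a : ℂ) (μ : ℝ) :
    gghQ d a μ = gouldHopper (d + 1) a (fun m ↦ ((dunklGamma μ m : ℝ) : ℂ)) :=
  rfl

theorem gghQ_duplication_general
    (d : ℕ) (a : ℂ) (μ : ℝ)
    (α : ℂ) (n : ℕ) (x : ℂ) :
    gghQ d a μ n (α * x) =
      (Nat.factorial n : ℂ) *
        ∑ k ∈ Finset.range (n / (d + 1) + 1),
          α ^ (n - k * (d + 1)) * (1 - α ^ (d + 1)) ^ k * a ^ k /
              ((Nat.factorial (n - k * (d + 1)) : ℂ) * (Nat.factorial k : ℂ)) *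
            gghQ d a μ (n - k * (d + 1)) x := by
  rw [gghQ_eq_gouldHopper]
  exact gouldHopper_duplication (d + 1) a _ α n x

/-- duplication formula for the generalized Gould–Hopper
polynomials:
`Q_n^{(d+1)}(αx,a,μ) = n! ∑_{k=0}^{⌊n/(d+1)⌋}
  (α^{n-k(d+1)} (1-α^{d+1})^k a^k / ((n-k(d+1))! k!)) Q_{n-k(d+1)}^{(d+1)}(x,a,μ)`. -/
theorem gghQ_duplication
    (d : ℕ) (hd : 1 ≤ d) (a : ℂ) (μ : ℝ) (hμ : -(1/2) < μ)
    (α : ℂ) (hα : α ≠ 0) (n : ℕ) (x : ℂ) :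
    gghQ d a μ n (α * x) =
      (Nat.factorial n : ℂ) *
        ∑ k ∈ Finset.range (n / (d + 1) + 1),
          α ^ (n - k * (d + 1)) * (1 - α ^ (d + 1)) ^ k * a ^ k /
              ((Nat.factorial (n - k * (d + 1)) : ℂ) * (Nat.factorial k : ℂ)) *
            gghQ d a μ (n - k * (d + 1)) x :=
  gghQ_duplication_general d a μ α n x
end
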